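/- arXiv:2601.04503 — 2 statements merged into one kernel-verified Lean document; each statement's English description precedes it below -/
import Mathlib

section
/- Let R be a free ℤ-module with basis 1, ω, θ equipped with a commutative ℤ-bilinear multiplication determined by ωθ = n, ω² = m + bω - aθ, θ² = ℓ + dω - cθ for integers a,b,c,d,ℓ,m,n. Then this multiplication is associative if and only if n = -ad, m = -ac, and ℓ = -bd. -/
/-- The unique commutative ℤ-bilinear multiplication on `ℤ ⊕ ℤω ⊕ ℤθ` (with `1`
acting as identity) determined by the relations
`ωθ = n`, `ω² = m + bω - aθ`, `θ² = ℓ + dω - cθ`.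
An element `x₀ + x₁ω + x₂θ` is represented by the triple `(x₀, x₁, x₂)`. -/
def cubicMul (a b c d l m n : ℤ) (x y : ℤ × ℤ × ℤ) : ℤ × ℤ × ℤ :=
  (x.1 * y.1 + x.2.1 * y.2.1 * m + x.2.2 * y.2.2 * l
      + (x.2.1 * y.2.2 + x.2.2 * y.2.1) * n,
   x.1 * y.2.1 + x.2.1 * y.1 + x.2.1 * y.2.1 * b + x.2.2 * y.2.2 * d,
   x.1 * y.2.2 + x.2.2 * y.1 - x.2.1 * y.2.1 * a - x.2.2 * y.2.2 * c)

/-- The multiplication above is associative if and only if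
`n = -ad`, `m = -ac`, and `ℓ = -bd`. -/
theorem stmt3 (a b c d l m n : ℤ) :
    (∀ x y z : ℤ × ℤ × ℤ,
        cubicMul a b c d l m n (cubicMul a b c d l m n x y) z =
          cubicMul a b c d l m n x (cubicMul a b c d l m n y z)) ↔
      (n = -(a * d) ∧ m = -(a * c) ∧ l = -(b * d)) := by
  constructor
  · intro h
    have h1 := h (0,1,0) (0,1,0) (0,0,1)
    have h2 := h (0,0,1) (0,0,1) (0,1,0)
    simp [cubicMul, Prod.ext_iff] at h1 h2
    obtain ⟨-, h12, h13⟩ := h1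
    obtain ⟨-, h22, -⟩ := h2
    refine ⟨by linarith, by linarith, by linarith⟩
  · rintro ⟨hn, hm, hl⟩ x y z
    subst hn hm hl
    simp only [cubicMul, Prod.ext_iff]
    refine ⟨by ring, by ring, by ring⟩
end

section
/- With the multiplication relations ωθ = -ad, ω² = -ac + bω - aθ, θ² = -bd + dω - cθ on ℤ ⊕ ℤω ⊕ ℤθ, the discriminant of the resulting cubic ring (i.e., the determinant of the trace form on the basis 1, ω, θ) equals b²c² - 4ac³ - 4b³d - 27a²d² + 18abcd, the discriminant of the binary cubic form ax³ + bx²y + cxy² + dy³. -/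
/-- The multiplication on `ℤ ⊕ ℤω ⊕ ℤθ` determined by `a, b, c, d`:
`ωθ = -ad`, `ω² = -ac + bω - aθ`, `θ² = -bd + dω - cθ`.
An element `x₀ + x₁ω + x₂θ` is represented by the triple `(x₀, x₁, x₂)`. -/
def ringMul (a b c d : ℤ) (x y : ℤ × ℤ × ℤ) : ℤ × ℤ × ℤ :=
  (x.1 * y.1 + x.2.1 * y.2.1 * (-(a * c)) + x.2.2 * y.2.2 * (-(b * d))
      + (x.2.1 * y.2.2 + x.2.2 * y.2.1) * (-(a * d)),
   x.1 * y.2.1 + x.2.1 * y.1 + x.2.1 * y.2.1 * b + x.2.2 * y.2.2 * d,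
   x.1 * y.2.2 + x.2.2 * y.1 - x.2.1 * y.2.1 * a - x.2.2 * y.2.2 * c)

/-- The standard basis `1, ω, θ` of the cubic ring. -/
def cubicBasis : Fin 3 → ℤ × ℤ × ℤ := ![(1, 0, 0), (0, 1, 0), (0, 0, 1)]

/-- The trace of multiplication by `x` on the cubic ring `R(a,b,c,d)`, computed
as the sum of the diagonal entries of the matrix of multiplication by `x` in
the basis `1, ω, θ`. -/
def ringTrace (a b c d : ℤ) (x : ℤ × ℤ × ℤ) : ℤ :=
  (ringMul a b c d x (1, 0, 0)).1 + (ringMul a b c d x (0, 1, 0)).2.1 +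
    (ringMul a b c d x (0, 0, 1)).2.2

/-- The discriminant of the cubic ring `R(a,b,c,d)`, namely the determinant of the
trace form `(Tr(e_i e_j))` on the basis `(1, ω, θ)`, equals the discriminant
`b²c² - 4ac³ - 4b³d - 27a²d² + 18abcd` of the binary cubic form
`ax³ + bx²y + cxy² + dy³`. -/
theorem stmt4 (a b c d : ℤ) :
    (Matrix.of fun i j : Fin 3 =>
        ringTrace a b c d (ringMul a b c d (cubicBasis i) (cubicBasis j))).det =
      b ^ 2 * c ^ 2 - 4 * a * c ^ 3 - 4 * b ^ 3 * d - 27 * a ^ 2 * d ^ 2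
        + 18 * a * b * c * d := by
  simp only [Matrix.det_fin_three, Matrix.of_apply, cubicBasis, ringMul, ringTrace,
    Matrix.cons_val_zero, Matrix.cons_val_one, Matrix.head_cons, Matrix.cons_val_two,
    Matrix.tail_cons]
  ring
end
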